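/- arXiv:1710.05296 — 3 statements merged into one kernel-verified Lean document; each statement's English description precedes it below -/
import Mathlib

section
/- The product of a compactly generated Hausdorff space with a locally compact Hausdorff space, endowed with the product topology, is compactly generated. -/
open Set Metric Topology

/-- Eventual domination of functions `ℕ → ℕ`. -/
def EvDom (f g : ℕ → ℕ) : Prop := ∀ᶠ n in Filter.atTop, f n ≤ g n

/-- The bounding number `𝔟`: the least cardinality of a family of functions `ℕ → ℕ`
unbounded with respect to eventual domination. -/
noncomputable def boundingNumber : Cardinal :=
  sInf {c : Cardinal | ∃ F : Set (ℕ → ℕ), Cardinal.mk F = c ∧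
    ∀ g : ℕ → ℕ, ∃ f ∈ F, ¬ EvDom f g}

/-- A cell decomposition of a Hausdorff space: characteristic maps from closed discs,
restricting to homeomorphisms onto their images on the open discs, with the open cells
partitioning the space, satisfying closure-finiteness. -/
structure CellStruct (X : Type) [TopologicalSpace X] where
  ι : Type
  dim : ι → ℕ
  map : (i : ι) → EuclideanSpace ℝ (Fin (dim i)) → X
  continuousOn : ∀ i, ContinuousOn (map i) (closedBall 0 1)
  isEmbedding : ∀ i, IsEmbedding ((ball (0 : EuclideanSpace ℝ (Fin (dim i))) 1).restrict (map i))
  pairwiseDisjoint :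
    Pairwise fun i j => Disjoint (map i '' ball 0 1) (map j '' ball 0 1)
  iUnion_eq : ⋃ i, map i '' ball 0 1 = univ
  closureFinite : ∀ i, ∃ F : Finset ι, (∀ j ∈ F, dim j < dim i) ∧
    map i '' sphere 0 1 ⊆ ⋃ j ∈ F, map j '' ball 0 1

namespace CellStruct

variable {X : Type} [TopologicalSpace X]

/-- The open cell with index `i`. -/
def openCell (C : CellStruct X) (i : C.ι) : Set X := C.map i '' ball 0 1

/-- The closed cell with index `i`. -/
def closedCell (C : CellStruct X) (i : C.ι) : Set X := C.map i '' closedBall 0 1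

/-- The image of the boundary sphere of the cell with index `i`. -/
def sphereImage (C : CellStruct X) (i : C.ι) : Set X := C.map i '' sphere 0 1

/-- The cell structure has the weak topology: a set is closed iff its intersection with
every closed cell is closed. -/
def HasWeakTopology (C : CellStruct X) : Prop :=
  ∀ A : Set X, IsClosed A ↔ ∀ i, IsClosed (A ∩ C.closedCell i)

end CellStruct

/-- A CW structure on a (Hausdorff) space: a cell decomposition with closure-finiteness,
such that the topology is the weak topology determined by the closed cells. -/
structure CWStruct (X : Type) [TopologicalSpace X] extends CellStruct X where
  weakTopology : toCellStruct.HasWeakTopology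

namespace CWStruct

variable {X : Type} [TopologicalSpace X]

/-- A subcomplex: a union of open cells containing the closure of each of its cells. -/
def IsSubcomplex (C : CWStruct X) (A : Set X) : Prop :=
  (∃ J : Set C.ι, A = ⋃ j ∈ J, C.openCell j) ∧
    ∀ i, C.openCell i ⊆ A → C.closedCell i ⊆ A

/-- The set of (indices of) cells of a subcomplex `A`. -/
def cells (C : CWStruct X) (A : Set X) : Set C.ι := {i | C.openCell i ⊆ A}

/-- `X` is locally less than `κ`: every point is in the interior of a subcomplex
with fewer than `κ` many cells. -/
def LocallyLT (C : CWStruct X) (κ : Cardinal) : Prop :=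
  ∀ x : X, ∃ A : Set X, C.IsSubcomplex A ∧ Cardinal.mk (C.cells A) < κ ∧ x ∈ interior A

/-- Locally finite: every point is in the interior of a finite subcomplex. -/
def LocallyFinite (C : CWStruct X) : Prop := C.LocallyLT Cardinal.aleph0

/-- Locally countable: every point is in the interior of a countable subcomplex. -/
def LocallyCountable (C : CWStruct X) : Prop := C.LocallyLT (Cardinal.aleph 1)

end CWStruct

/-- `E` is a CW structure on `X × Y` (with the product topology) whose cells are
exactly the products of cells of `C` and `D`, with the corresponding dimensions.
The existence of such an `E` expresses that the product topology on `X × Y`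
makes it a CW complex with the product cell structure. -/
def IsProductCWStruct {X Y : Type} [TopologicalSpace X] [TopologicalSpace Y]
    (C : CWStruct X) (D : CWStruct Y) (E : CWStruct (X × Y)) : Prop :=
  (∀ k : E.ι, ∃ (a : C.ι) (b : D.ι),
      E.openCell k = C.openCell a ×ˢ D.openCell b ∧ E.dim k = C.dim a + D.dim b) ∧
  (∀ (a : C.ι) (b : D.ι), ∃ k : E.ι, E.openCell k = C.openCell a ×ˢ D.openCell b)

/-- A space is compactly generated: a set is closed whenever its intersection with
every compact subset is closed in the subspace topology. -/
def IsKSpace (X : Type) [TopologicalSpace X] : Prop :=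
  ∀ A : Set X, (∀ K : Set X, IsCompact K → IsClosed ((Subtype.val ⁻¹' A : Set K))) → IsClosed A

namespace CWStruct

variable {X : Type} [TopologicalSpace X]

/-- The collar neighbourhood `C^e_n(U)` inside the closed cell `e`:
the image of `{t • z : t ∈ (n/(n+1), 1], z ∈ Sᵈ, φ_e z ∈ U}` under `φ_e`. -/
noncomputable def collar (C : CWStruct X) (e : C.ι) (n : ℕ) (U : Set X) : Set X :=
  C.map e '' {p | ∃ t ∈ Set.Ioc ((n : ℝ) / (n + 1)) 1,
    ∃ z : EuclideanSpace ℝ (Fin (C.dim e)), ‖z‖ = 1 ∧ C.map e z ∈ U ∧ p = t • z}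

/-- The basic neighbourhood `B_n(x)` of `x = φ_{i₀} z` inside its open cell: the image of
the open ball about `z` of radius `min (1/(n+1)) ((1 - ‖z‖)/2)`. -/
noncomputable def ballNbhd (C : CWStruct X) (i₀ : C.ι)
    (z : EuclideanSpace ℝ (Fin (C.dim i₀))) (n : ℕ) : Set X :=
  C.map i₀ '' Metric.ball z (min (1 / (n + 1)) ((1 - ‖z‖) / 2))

open Classical in
/-- The part of the neighbourhood `U_f(x)` lying in the `n`-skeleton, defined by recursion
on dimension: start with `B_{f i₀}(x)` in dimension `dim i₀` (with the empty set in every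
other cell of dimension at most `dim i₀`), and extend through each cell of each higher
dimension by the collar neighbourhoods `C^e_{f e}(·)`. -/
noncomputable def nbhdSkel (C : CWStruct X) (i₀ : C.ι)
    (z : EuclideanSpace ℝ (Fin (C.dim i₀))) (f : C.ι → ℕ) : ℕ → Set X
  | 0 => if C.dim i₀ = 0 then C.ballNbhd i₀ z (f i₀) else ∅
  | n + 1 =>
      (if C.dim i₀ = n + 1 then C.ballNbhd i₀ z (f i₀) else ∅) ∪
      C.nbhdSkel i₀ z f n ∪
      ⋃ e : C.ι, if C.dim e = n + 1 then C.collar e (f e) (C.nbhdSkel i₀ z f n) else ∅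

/-- The open neighbourhood `U_f(x)` of `x = φ_{i₀} z` determined by `f : ι → ℕ`. -/
noncomputable def nbhd (C : CWStruct X) (i₀ : C.ι)
    (z : EuclideanSpace ℝ (Fin (C.dim i₀))) (f : C.ι → ℕ) : Set X :=
  ⋃ n, C.nbhdSkel i₀ z f n

end CWStruct


/-- The product of a compactly generated Hausdorff space with a locally compact Hausdorff
space is compactly generated. -/
theorem isKSpace_prod {X Y : Type} [TopologicalSpace X] [TopologicalSpace Y]
    [T2Space X] [T2Space Y] [WeaklyLocallyCompactSpace Y]
    (hX : IsKSpace X) : IsKSpace (X × Y) := by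
  intro A hA
  have key : ∀ S : Set (X × Y), IsCompact S → IsCompact (S ∩ A) := by
    intro S hS
    have : CompactSpace S := isCompact_iff_compactSpace.mp hS
    have h1 : IsCompact (Subtype.val ⁻¹' A : Set S) := (hA S hS).isCompact
    have := h1.image continuous_subtype_val
    rwa [Subtype.image_preimage_coe] at this
  rw [← isOpen_compl_iff, isOpen_iff_mem_nhds]
  rintro ⟨x₀, y₀⟩ hxy
  obtain ⟨Q, hQc, hQ⟩ := exists_compact_mem_nhds y₀
  -- slice
  set S : Set Y := Prod.snd '' (({x₀} ×ˢ Q) ∩ A) with hS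
  have hScomp : IsCompact S := (key _ (isCompact_singleton.prod hQc)).image continuous_snd
  have hy₀S : y₀ ∉ S := by
    rintro ⟨⟨x, y⟩, ⟨⟨hx, _⟩, hmem⟩, rfl⟩
    simp only [mem_singleton_iff] at hx
    exact hxy (hx ▸ hmem)
  obtain ⟨U, V, hU, hV, hSU, hy₀V, hUV⟩ := hScomp.separation_of_notMem hy₀S
  set Q' : Set Y := Q \ U with hQ'
  have hQ'c : IsCompact Q' := hQc.diff hU
  have hQ'n : Q' ∈ nhds y₀ := by
    filter_upwards [hQ, hV.mem_nhds hy₀V] with y h1 h2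
    exact ⟨h1, fun hyU => (hUV.ne_of_mem hyU h2) rfl⟩
  -- projection
  set B : Set X := Prod.fst '' ((univ ×ˢ Q') ∩ A) with hB
  have hBclosed : IsClosed B := by
    refine hX B fun K hK => ?_
    have : Subtype.val ⁻¹' B = (Subtype.val ⁻¹' (B ∩ K) : Set K) := by
      ext ⟨x, hx⟩; simp [hx]
    rw [this]
    have hBK : IsCompact (B ∩ K) := by
      have h2 : IsCompact (Prod.fst '' ((K ×ˢ Q') ∩ A)) :=
        ((key _ (hK.prod hQ'c)).image continuous_fst)
      have : B ∩ K = Prod.fst '' ((K ×ˢ Q') ∩ A) := by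
        ext x
        constructor
        · rintro ⟨⟨⟨a, b⟩, ⟨⟨-, hb⟩, hab⟩, rfl⟩, hxK⟩
          exact ⟨(a, b), ⟨⟨hxK, hb⟩, hab⟩, rfl⟩
        · rintro ⟨⟨a, b⟩, ⟨⟨ha, hb⟩, hab⟩, rfl⟩
          exact ⟨⟨(a, b), ⟨⟨trivial, hb⟩, hab⟩, rfl⟩, ha⟩
      rwa [this]
    exact hBK.isClosed.preimage continuous_subtype_val
  have hx₀B : x₀ ∉ B := by
    rintro ⟨⟨a, b⟩, ⟨⟨-, hbQ'⟩, hab⟩, rfl⟩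
    exact hbQ'.2 (hSU ⟨(a, b), ⟨⟨rfl, hbQ'.1⟩, hab⟩, rfl⟩)
  have : Bᶜ ×ˢ Q' ∈ nhds (x₀, y₀) :=
    prod_mem_nhds (hBclosed.isOpen_compl.mem_nhds hx₀B) hQ'n
  filter_upwards [this] with ⟨x, y⟩ ⟨hxB, hyQ'⟩ hmem
  exact hxB ⟨(x, y), ⟨⟨trivial, hyQ'⟩, hmem⟩, rfl⟩
end

section
/- If X is a CW complex and Y is a locally finite CW complex, then the product space X × Y with the product topology is compactly generated, and hence is a CW complex with the product cell structure. -/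
open Set Metric Topology

/-!
A CW complex is compactly generated, its topology being coherent with the compact closed cells.
A compactly generated Hausdorff space `X` is a quotient of the disjoint union of its compact
subsets, and the product of a quotient map with the identity of a locally compact space is again
a quotient map; so `X × Y` is a quotient of a locally compact Hausdorff space, hence compactly
generated. The product cells come from the products of characteristic maps, precomposed with a
homeomorphism `Dᵐ⁺ⁿ ≅ Dᵐ × Dⁿ`. Since a compact set meets only finitely many cells, a set meeting
every closed product cell in a closed set meets every compact set in a closed set, and compact
generation of `X × Y` turns this into the weak topology.
-/

instance Sigma.weaklyLocallyCompactSpace {ι : Type*} {Z : ι → Type*}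
    [∀ i, TopologicalSpace (Z i)] [∀ i, CompactSpace (Z i)] :
    WeaklyLocallyCompactSpace (Σ i, Z i) :=
  ⟨fun ⟨i, z⟩ ↦ ⟨range (Sigma.mk i), isCompact_range continuous_sigmaMk,
    isOpen_range_sigmaMk.mem_nhds ⟨z, rfl⟩⟩⟩

theorem Topology.IsQuotientMap.prodMap_id {X₀ X Y : Type*} [TopologicalSpace X₀]
    [TopologicalSpace X] [TopologicalSpace Y] [LocallyCompactSpace Y] {f : X₀ → X}
    (hf : IsQuotientMap f) : IsQuotientMap (Prod.map f (id : Y → Y)) := by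
  refine ⟨.of_isOpen_preimage_iff_isOpen fun s ↦ ⟨fun hs ↦ ?_, fun hs ↦ hs.preimage (by fun_prop)⟩,
    hf.surjective.prodMap Function.surjective_id⟩
  exact continuous_Prop.1 (hf.continuous_lift_prod_left (g := (· ∈ s)) (continuous_Prop.2 hs))

section CompactlyGenerated

variable {X Y : Type} [TopologicalSpace X] [TopologicalSpace Y] [T2Space X]

theorem isQuotientMap_sigma_isCompact_val [CompactlyGeneratedSpace X] :
    IsQuotientMap (fun p : Σ K : {K : Set X // IsCompact K}, K.1 ↦ (p.2 : X)) := by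
  refine isQuotientMap_iff_isClosed.2 ⟨fun x ↦ ⟨⟨⟨{x}, isCompact_singleton⟩, ⟨x, rfl⟩⟩, rfl⟩,
    fun A ↦ ⟨fun hA ↦ hA.preimage (continuous_sigma fun _ ↦ continuous_subtype_val), fun hA ↦ ?_⟩⟩
  refine CompactlyGeneratedSpace.isClosed fun K hK ↦ ?_
  rw [inter_comm, ← hK.isClosed.inter_preimage_val_iff]
  exact isClosed_sigma_iff.1 hA ⟨K, hK⟩

theorem CompactlyGeneratedSpace.prod_of_locallyCompactSpace [CompactlyGeneratedSpace X]
    [T2Space Y] [LocallyCompactSpace Y] : CompactlyGeneratedSpace (X × Y) := by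
  have : ∀ K : {K : Set X // IsCompact K}, CompactSpace K.1 :=
    fun K ↦ isCompact_iff_compactSpace.1 K.2
  have hq := (isQuotientMap_sigma_isCompact_val (X := X)).prodMap_id (Y := Y)
  exact compactlyGeneratedSpace_of_coinduced hq.continuous hq.eq_coinduced

theorem isKSpace_of_compactlyGeneratedSpace [CompactlyGeneratedSpace X] : IsKSpace X :=
  fun _ hA ↦ CompactlyGeneratedSpace.isClosed fun K hK ↦ by
    rw [inter_comm, ← hK.isClosed.inter_preimage_val_iff]
    exact hA K hK

end CompactlyGenerated

namespace ContinuousLinearEquiv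

variable {E F : Type*} [NormedAddCommGroup E] [NormedSpace ℝ E] [NormedAddCommGroup F]
  [NormedSpace ℝ F] (e : E ≃L[ℝ] F)

noncomputable def radial (x : E) : F := (‖x‖ / ‖e x‖) • e x

theorem norm_radial (x : E) : ‖e.radial x‖ = ‖x‖ := by
  rcases eq_or_ne x 0 with rfl | hx
  · simp [radial]
  · have : ‖e x‖ ≠ 0 := by simpa using hx
    rw [radial, norm_smul, Real.norm_of_nonneg (by positivity), div_mul_cancel₀ _ this]

theorem symm_radial_radial (x : E) : e.symm.radial (e.radial x) = x := by
  rcases eq_or_ne x 0 with rfl | hx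
  · simp [radial]
  · have hex : ‖e x‖ ≠ 0 := by simpa using hx
    have hx' : ‖x‖ ≠ 0 := by simpa using hx
    rw [radial, norm_radial, radial, map_smul, symm_apply_apply, norm_smul,
      Real.norm_of_nonneg (by positivity), smul_smul]
    field_simp
    exact one_smul ℝ x

theorem continuous_radial : Continuous e.radial := by
  refine continuous_iff_continuousAt.2 fun x ↦ ?_
  rcases eq_or_ne x 0 with rfl | hx
  · rw [ContinuousAt, show e.radial 0 = 0 by simp [radial], tendsto_zero_iff_norm_tendsto_zero]
    simpa [norm_radial] using continuous_norm.tendsto (0 : E)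
  · have : ‖e x‖ ≠ 0 := by simpa using hx
    unfold radial
    fun_prop (disch := exact this)

@[simps]
noncomputable def radialHomeomorph : E ≃ₜ F where
  toFun := e.radial
  invFun := e.symm.radial
  left_inv := e.symm_radial_radial
  right_inv := e.symm.symm_radial_radial
  continuous_toFun := e.continuous_radial
  continuous_invFun := e.symm.continuous_radial

theorem radialHomeomorph_image_ball (r : ℝ) : e.radialHomeomorph '' ball 0 r = ball 0 r := by
  rw [Homeomorph.image_eq_preimage_symm]; ext; simp [norm_radial]

theorem radialHomeomorph_image_closedBall (r : ℝ) :
    e.radialHomeomorph '' closedBall 0 r = closedBall 0 r := by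
  rw [Homeomorph.image_eq_preimage_symm]; ext; simp [norm_radial]

theorem radialHomeomorph_image_sphere (r : ℝ) :
    e.radialHomeomorph '' sphere 0 r = sphere 0 r := by
  rw [Homeomorph.image_eq_preimage_symm]; ext; simp [norm_radial]

end ContinuousLinearEquiv

namespace EuclideanSpace

/-- A homeomorphism `ℝᵐ⁺ⁿ ≃ ℝᵐ × ℝⁿ` matching the unit discs of `ℝᵐ⁺ⁿ` with products of unit
discs (`ℝᵐ × ℝⁿ` carries the sup norm). -/
noncomputable def finAddHomeomorphProd (m n : ℕ) :
    EuclideanSpace ℝ (Fin (m + n)) ≃ₜ EuclideanSpace ℝ (Fin m) × EuclideanSpace ℝ (Fin n) :=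
  finAddEquivProd.radialHomeomorph

variable (m n : ℕ)

theorem finAddHomeomorphProd_image_ball :
    finAddHomeomorphProd m n '' ball 0 1 = ball 0 1 ×ˢ ball 0 1 := by
  rw [ball_prod_same, Prod.mk_zero_zero]
  exact ContinuousLinearEquiv.radialHomeomorph_image_ball _ 1

theorem finAddHomeomorphProd_image_closedBall :
    finAddHomeomorphProd m n '' closedBall 0 1 = closedBall 0 1 ×ˢ closedBall 0 1 := by
  rw [closedBall_prod_same, Prod.mk_zero_zero]
  exact ContinuousLinearEquiv.radialHomeomorph_image_closedBall _ 1

theorem finAddHomeomorphProd_image_sphere :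
    finAddHomeomorphProd m n '' sphere 0 1 =
      sphere 0 1 ×ˢ closedBall 0 1 ∪ closedBall 0 1 ×ˢ sphere 0 1 := by
  rw [← sphere_prod (0, 0) 1, Prod.mk_zero_zero]
  exact ContinuousLinearEquiv.radialHomeomorph_image_sphere _ 1

end EuclideanSpace

theorem Topology.IsEmbedding.domRestrict_comp_homeomorph {A B Z : Type*} [TopologicalSpace A]
    [TopologicalSpace B] [TopologicalSpace Z] (h : A ≃ₜ B) {g : B → Z} {s : Set A}
    (hg : IsEmbedding ((h '' s).domRestrict g)) : IsEmbedding (s.domRestrict (g ∘ h)) :=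
  hg.comp (h.image s).isEmbedding

theorem Topology.IsEmbedding.domRestrict_prodMap {A B Z W : Type*} [TopologicalSpace A]
    [TopologicalSpace B] [TopologicalSpace Z] [TopologicalSpace W] {f : A → Z} {g : B → W}
    {s : Set A} {t : Set B} (hf : IsEmbedding (s.domRestrict f))
    (hg : IsEmbedding (t.domRestrict g)) :
    IsEmbedding ((s ×ˢ t).domRestrict (Prod.map f g)) :=
  (hf.prodMap hg).comp (Homeomorph.Set.prod s t).isEmbedding

namespace CWStruct

variable {X : Type} [TopologicalSpace X] (C : CWStruct X)

theorem openCell_subset_closedCell (i : C.ι) : C.openCell i ⊆ C.closedCell i :=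
  image_mono ball_subset_closedBall

theorem closedCell_eq_openCell_union_sphereImage (i : C.ι) :
    C.closedCell i = C.openCell i ∪ C.sphereImage i := by
  rw [CellStruct.closedCell, CellStruct.openCell, CellStruct.sphereImage, ← image_union,
    ball_union_sphere]

theorem isCompact_closedCell (i : C.ι) : IsCompact (C.closedCell i) :=
  (isCompact_closedBall _ _).image_of_continuousOn (C.continuousOn i)

theorem exists_mem_openCell (x : X) : ∃ i, x ∈ C.openCell i :=
  mem_iUnion.1 (C.iUnion_eq.symm ▸ mem_univ x)

theorem eq_of_mem_openCell {i j : C.ι} {x : X} (hi : x ∈ C.openCell i) (hj : x ∈ C.openCell j) :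
    i = j :=
  by_contra fun h ↦ disjoint_left.1 (C.pairwiseDisjoint h) hi hj

open Classical in
theorem exists_mem_openCell_of_mem_closedCell {i : C.ι} {F : Finset C.ι}
    (hF : C.sphereImage i ⊆ ⋃ j ∈ F, C.openCell j) (hFdim : ∀ j ∈ F, C.dim j < C.dim i)
    {x : X} (hx : x ∈ C.closedCell i) : ∃ j ∈ insert i F, C.dim j ≤ C.dim i ∧ x ∈ C.openCell j := by
  rcases (C.closedCell_eq_openCell_union_sphereImage i ▸ hx) with hx | hx
  · exact ⟨i, Finset.mem_insert_self i F, le_rfl, hx⟩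
  · obtain ⟨j, hj, hxj⟩ := mem_iUnion₂.1 (hF hx)
    exact ⟨j, Finset.mem_insert_of_mem hj, (hFdim j hj).le, hxj⟩

theorem finite_inter_closedCell_of_subsingleton {T : Set X}
    (hT : ∀ i, (T ∩ C.openCell i).Subsingleton) (i : C.ι) : (T ∩ C.closedCell i).Finite := by
  induction h : C.dim i using Nat.strong_induction_on generalizing i with
  | _ d ih =>
    obtain ⟨F, hFdim, hF⟩ := C.closureFinite i
    rw [closedCell_eq_openCell_union_sphereImage, inter_union_distrib_left]
    refine (hT i).finite.union
      ((F.finite_toSet.biUnion fun j hj ↦ ih _ (h ▸ hFdim j hj) j rfl).subset ?_)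
    rintro x ⟨hxT, hx⟩
    obtain ⟨j, hj, hxj⟩ := mem_iUnion₂.1 (hF hx)
    exact mem_iUnion₂.2 ⟨j, hj, hxT, C.openCell_subset_closedCell j hxj⟩

/-- Every subset of such a `T` is of the same kind, hence closed: `T` is closed and discrete. -/
theorem finite_of_subsingleton_inter_openCell [T1Space X] {T K : Set X}
    (hT : ∀ i, (T ∩ C.openCell i).Subsingleton) (hK : IsCompact K) (hTK : T ⊆ K) : T.Finite := by
  have hclosed : ∀ S ⊆ T, IsClosed S := fun S hS ↦ (C.weakTopology S).2 fun i ↦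
    (C.finite_inter_closedCell_of_subsingleton
      (fun j ↦ (hT j).anti (inter_subset_inter_left _ hS)) i).isClosed
  have : DiscreteTopology T := discreteTopology_iff_forall_isClosed.2 fun U ↦ by
    rw [← Subtype.val_injective.preimage_image U]
    exact (hclosed _ (Subtype.coe_image_subset T U)).preimage continuous_subtype_val
  exact (hK.of_isClosed_subset (hclosed T subset_rfl) hTK).finite ⟨this⟩

theorem finite_setOf_openCell_inter_nonempty [T1Space X] {K : Set X} (hK : IsCompact K) :
    {i | (C.openCell i ∩ K).Nonempty}.Finite := by
  choose p hp using fun i : {i | (C.openCell i ∩ K).Nonempty} ↦ i.2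
  have hrange : (range p).Finite := by
    refine C.finite_of_subsingleton_inter_openCell (fun i ↦ ?_) hK
      (range_subset_iff.2 fun j ↦ (hp j).2)
    rintro _ ⟨⟨j, rfl⟩, hj⟩ _ ⟨⟨j', rfl⟩, hj'⟩
    rw [Subtype.ext ((C.eq_of_mem_openCell (hp j).1 hj).trans
      (C.eq_of_mem_openCell (hp j').1 hj').symm)]
  have := hrange.to_subtype
  exact finite_coe_iff.1 (Finite.of_injective (rangeFactorization p) fun j j' h ↦
    Subtype.ext (C.eq_of_mem_openCell (hp j).1 <| by
      rw [show p j = p j' from congrArg Subtype.val h]; exact (hp j').1))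

theorem subset_iUnion_closedCell_of_isCompact [T1Space X] {K : Set X} (hK : IsCompact K) :
    ∃ S : Set C.ι, S.Finite ∧ K ⊆ ⋃ i ∈ S, C.closedCell i := by
  refine ⟨_, C.finite_setOf_openCell_inter_nonempty hK, fun x hx ↦ ?_⟩
  obtain ⟨i, hi⟩ := C.exists_mem_openCell x
  exact mem_iUnion₂.2 ⟨i, ⟨x, hi, hx⟩, C.openCell_subset_closedCell i hi⟩

end CWStruct

theorem CWStruct.compactlyGeneratedSpace {X : Type} [TopologicalSpace X] [T2Space X]
    (C : CWStruct X) : CompactlyGeneratedSpace X :=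
  compactlyGeneratedSpace_of_isClosed_of_t2 fun A hA ↦
    (C.weakTopology A).2 fun i ↦ hA _ (C.isCompact_closedCell i)

theorem CWStruct.LocallyFinite.weaklyLocallyCompactSpace {X : Type} [TopologicalSpace X]
    {C : CWStruct X} (hC : C.LocallyFinite) :
    WeaklyLocallyCompactSpace X := by
  refine ⟨fun x ↦ ?_⟩
  obtain ⟨A, ⟨⟨J, rfl⟩, -⟩, hcard, hx⟩ := hC x
  have hfin : (C.cells (⋃ j ∈ J, C.openCell j)).Finite :=
    finite_coe_iff.1 (Cardinal.mk_lt_aleph0_iff.1 hcard)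
  refine ⟨_, hfin.isCompact_biUnion fun i _ ↦ C.isCompact_closedCell i,
    Filter.mem_of_superset (mem_interior_iff_mem_nhds.1 hx) (iUnion₂_subset fun j hj y hy ↦ ?_)⟩
  exact mem_iUnion₂.2 ⟨j, subset_biUnion_of_mem (u := C.openCell) hj,
    C.openCell_subset_closedCell j hy⟩

namespace CWStruct

variable {X Y : Type} [TopologicalSpace X] [TopologicalSpace Y] (C : CWStruct X) (D : CWStruct Y)

noncomputable def prodCellMap (k : C.ι × D.ι) :
    EuclideanSpace ℝ (Fin (C.dim k.1 + D.dim k.2)) → X × Y :=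
  Prod.map (C.map k.1) (D.map k.2) ∘ EuclideanSpace.finAddHomeomorphProd _ _

variable (k : C.ι × D.ι)

theorem prodCellMap_image_ball :
    C.prodCellMap D k '' ball 0 1 = C.openCell k.1 ×ˢ D.openCell k.2 := by
  rw [prodCellMap, image_comp, EuclideanSpace.finAddHomeomorphProd_image_ball,
    prodMap_image_prod]
  rfl

theorem prodCellMap_image_closedBall :
    C.prodCellMap D k '' closedBall 0 1 = C.closedCell k.1 ×ˢ D.closedCell k.2 := by
  rw [prodCellMap, image_comp, EuclideanSpace.finAddHomeomorphProd_image_closedBall,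
    prodMap_image_prod]
  rfl

theorem prodCellMap_image_sphere : C.prodCellMap D k '' sphere 0 1 =
    C.sphereImage k.1 ×ˢ D.closedCell k.2 ∪ C.closedCell k.1 ×ˢ D.sphereImage k.2 := by
  rw [prodCellMap, image_comp, EuclideanSpace.finAddHomeomorphProd_image_sphere, image_union,
    prodMap_image_prod, prodMap_image_prod]
  rfl

theorem prodCellMap_continuousOn : ContinuousOn (C.prodCellMap D k) (closedBall 0 1) :=
  ((C.continuousOn k.1).prodMap (D.continuousOn k.2)).comp
    (EuclideanSpace.finAddHomeomorphProd _ _).continuous.continuousOn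
    (EuclideanSpace.finAddHomeomorphProd_image_closedBall _ _ ▸ mapsTo_image _ _)

theorem prodCellMap_isEmbedding :
    IsEmbedding ((ball 0 1).domRestrict (C.prodCellMap D k)) := by
  refine IsEmbedding.domRestrict_comp_homeomorph _ ?_
  rw [EuclideanSpace.finAddHomeomorphProd_image_ball]
  exact (C.isEmbedding k.1).domRestrict_prodMap (D.isEmbedding k.2)

open Classical in
theorem prodCellMap_closureFinite : ∃ F : Finset (C.ι × D.ι),
    (∀ j ∈ F, C.dim j.1 + D.dim j.2 < C.dim k.1 + D.dim k.2) ∧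
    C.prodCellMap D k '' sphere 0 1 ⊆ ⋃ j ∈ F, C.prodCellMap D j '' ball 0 1 := by
  obtain ⟨F₁, hF₁dim, hF₁⟩ := C.closureFinite k.1
  obtain ⟨F₂, hF₂dim, hF₂⟩ := D.closureFinite k.2
  refine ⟨((insert k.1 F₁) ×ˢ (insert k.2 F₂)).filter
    fun j ↦ C.dim j.1 + D.dim j.2 < C.dim k.1 + D.dim k.2,
    fun j hj ↦ (Finset.mem_filter.1 hj).2, ?_⟩
  rw [prodCellMap_image_sphere]
  rintro ⟨x, y⟩ (⟨hx, hy⟩ | ⟨hx, hy⟩)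
  · obtain ⟨a, ha, hxa⟩ := mem_iUnion₂.1 (hF₁ hx)
    obtain ⟨b, hb, hbdim, hyb⟩ := D.exists_mem_openCell_of_mem_closedCell hF₂ hF₂dim hy
    refine mem_iUnion₂.2 ⟨(a, b), Finset.mem_filter.2 ⟨Finset.mem_product.2
      ⟨Finset.mem_insert_of_mem ha, hb⟩, by have := hF₁dim a ha; dsimp only; omega⟩, ?_⟩
    rw [prodCellMap_image_ball]
    exact ⟨hxa, hyb⟩
  · obtain ⟨a, ha, hadim, hxa⟩ := C.exists_mem_openCell_of_mem_closedCell hF₁ hF₁dim hx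
    obtain ⟨b, hb, hyb⟩ := mem_iUnion₂.1 (hF₂ hy)
    refine mem_iUnion₂.2 ⟨(a, b), Finset.mem_filter.2 ⟨Finset.mem_product.2
      ⟨ha, Finset.mem_insert_of_mem hb⟩, by have := hF₂dim b hb; dsimp only; omega⟩, ?_⟩
    rw [prodCellMap_image_ball]
    exact ⟨hxa, hyb⟩

variable [T2Space X] [T2Space Y]

theorem isClosed_of_isClosed_inter_prod_closedCell [CompactlyGeneratedSpace (X × Y)]
    {A : Set (X × Y)} (hA : ∀ a b, IsClosed (A ∩ C.closedCell a ×ˢ D.closedCell b)) :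
    IsClosed A := by
  refine CompactlyGeneratedSpace.isClosed fun K hK ↦ ?_
  obtain ⟨S₁, hS₁, hK₁⟩ := C.subset_iUnion_closedCell_of_isCompact (hK.image continuous_fst)
  obtain ⟨S₂, hS₂, hK₂⟩ := D.subset_iUnion_closedCell_of_isCompact (hK.image continuous_snd)
  have hKU : K ⊆ ⋃ a ∈ S₁, ⋃ b ∈ S₂, C.closedCell a ×ˢ D.closedCell b := fun p hp ↦ by
    obtain ⟨a, ha, hpa⟩ := mem_iUnion₂.1 (hK₁ (mem_image_of_mem _ hp))
    obtain ⟨b, hb, hpb⟩ := mem_iUnion₂.1 (hK₂ (mem_image_of_mem _ hp))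
    exact mem_iUnion₂.2 ⟨a, ha, mem_iUnion₂.2 ⟨b, hb, hpa, hpb⟩⟩
  have hAU : IsClosed (⋃ a ∈ S₁, ⋃ b ∈ S₂, A ∩ C.closedCell a ×ˢ D.closedCell b) :=
    hS₁.isClosed_biUnion fun a _ ↦ hS₂.isClosed_biUnion fun b _ ↦ hA a b
  simp only [← inter_iUnion₂] at hAU
  rw [← inter_eq_right.2 hKU, ← inter_assoc]
  exact hAU.inter hK.isClosed

noncomputable def prod [CompactlyGeneratedSpace (X × Y)] : CWStruct (X × Y) where
  ι := C.ι × D.ι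
  dim k := C.dim k.1 + D.dim k.2
  map := C.prodCellMap D
  continuousOn := C.prodCellMap_continuousOn D
  isEmbedding := C.prodCellMap_isEmbedding D
  pairwiseDisjoint k k' hkk' := by
    simp only [prodCellMap_image_ball, disjoint_prod]
    by_cases h : k.1 = k'.1
    · exact .inr (D.pairwiseDisjoint fun h' ↦ hkk' (Prod.ext h h'))
    · exact .inl (C.pairwiseDisjoint h)
  iUnion_eq := by
    refine eq_univ_of_forall fun ⟨x, y⟩ ↦ ?_
    obtain ⟨a, ha⟩ := C.exists_mem_openCell x
    obtain ⟨b, hb⟩ := D.exists_mem_openCell y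
    exact mem_iUnion.2 ⟨(a, b), (C.prodCellMap_image_ball D (a, b)).symm ▸ ⟨ha, hb⟩⟩
  closureFinite := C.prodCellMap_closureFinite D
  weakTopology A := by
    simp only [CellStruct.closedCell, prodCellMap_image_closedBall]
    exact ⟨fun hA k ↦
      hA.inter ((C.isCompact_closedCell k.1).prod (D.isCompact_closedCell k.2)).isClosed,
      fun hA ↦ C.isClosed_of_isClosed_inter_prod_closedCell D fun a b ↦ hA (a, b)⟩

theorem prod_openCell [CompactlyGeneratedSpace (X × Y)] :
    (C.prod D).openCell k = C.openCell k.1 ×ˢ D.openCell k.2 :=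
  C.prodCellMap_image_ball D k

end CWStruct

/-- The product of a CW complex with a locally finite CW complex is compactly generated,
and hence is a CW complex with the product cell structure. -/
theorem prod_cw_of_locallyFinite {X Y : Type} [TopologicalSpace X] [TopologicalSpace Y]
    [T2Space X] [T2Space Y] (C : CWStruct X) (D : CWStruct Y) (hD : D.LocallyFinite) :
    IsKSpace (X × Y) ∧ ∃ E : CWStruct (X × Y), IsProductCWStruct C D E := by
  have := C.compactlyGeneratedSpace
  have := hD.weaklyLocallyCompactSpace
  have : CompactlyGeneratedSpace (X × Y) := .prod_of_locallyCompactSpace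
  exact ⟨isKSpace_of_compactlyGeneratedSpace, C.prod D,
    fun k ↦ ⟨k.1, k.2, C.prod_openCell D k, rfl⟩, fun a b ↦ ⟨(a, b), C.prod_openCell D (a, b)⟩⟩
end

section
/- If a CW complex X is locally less than κ, for κ an uncountable regular cardinal, then every point of X has a connected open neighbourhood whose closure is contained in a connected subcomplex with fewer than κ many cells. -/
open Set Metric Topology

/-!
Let `A₀` be a subcomplex with fewer than `κ` cells having `x` in its interior. A CW complex is
locally connected: its topology is coherent with the characteristic maps, whose domains are
locally connected balls. Hence the component `U` of `x` in the interior of `A₀` is open. As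
subcomplexes are closed and closed cells are connected, the component of `x` in `A₀` is a
connected subcomplex with no more cells than `A₀`, and it contains the closure of `U`.
-/

theorem Continuous.isOpen_preimage_connectedComponentIn {Y Z : Type*} [TopologicalSpace Y]
    [TopologicalSpace Z] [LocallyConnectedSpace Y] {f : Y → Z} (hf : Continuous f) {V : Set Z}
    (hV : IsOpen V) (x : Z) : IsOpen (f ⁻¹' connectedComponentIn V x) := by
  rw [hf.continuousOn.preimage_connectedComponentIn]
  exact isOpen_biUnion fun _ _ => (hV.preimage hf).connectedComponentIn

namespace CellStruct

variable {X : Type} [TopologicalSpace X] (C : CellStruct X)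

theorem continuous_domRestrict_map (i : C.ι) :
    Continuous ((closedBall 0 1).domRestrict (C.map i)) :=
  continuousOn_iff_continuous_domRestrict.1 (C.continuousOn i)

theorem isPreconnected_closedCell (i : C.ι) : IsPreconnected (C.closedCell i) :=
  (convex_closedBall 0 1).isPreconnected.image _ (C.continuousOn i)

theorem closedCell_eq_openCell_union_sphereImage (i : C.ι) :
    C.closedCell i = C.openCell i ∪ C.sphereImage i := by
  rw [openCell, sphereImage, closedCell, ← image_union, ball_union_sphere]

theorem openCell_subset_closedCell (i : C.ι) : C.openCell i ⊆ C.closedCell i :=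
  image_mono ball_subset_closedBall

theorem openCell_nonempty (i : C.ι) : (C.openCell i).Nonempty :=
  ⟨C.map i 0, 0, mem_ball_self one_pos, rfl⟩

theorem eq_of_mem_openCell {i j : C.ι} {y : X} (hi : y ∈ C.openCell i)
    (hj : y ∈ C.openCell j) : i = j := by
  by_contra hne
  exact disjoint_left.1 (C.pairwiseDisjoint hne) hi hj

theorem exists_mem_openCell (y : X) : ∃ i, y ∈ C.openCell i :=
  mem_iUnion.1 (C.iUnion_eq ▸ mem_univ y)

end CellStruct

namespace CWStruct

variable {X : Type} [TopologicalSpace X] {C : CWStruct X} {A : Set X}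

theorem IsSubcomplex.closedCell_subset_of_nonempty (hA : C.IsSubcomplex A) {i : C.ι}
    (h : (C.openCell i ∩ A).Nonempty) : C.closedCell i ⊆ A := by
  obtain ⟨⟨J, rfl⟩, hclosed⟩ := hA
  obtain ⟨y, hyi, hyA⟩ := h
  obtain ⟨j, hjJ, hyj⟩ := mem_iUnion₂.1 hyA
  obtain rfl := C.eq_of_mem_openCell hyi hyj
  exact hclosed i (subset_biUnion_of_mem hjJ)

theorem IsSubcomplex.connectedComponentIn (hA : C.IsSubcomplex A) (x : X) :
    C.IsSubcomplex (_root_.connectedComponentIn A x) := by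
  have hclosed : ∀ i, (C.openCell i ∩ _root_.connectedComponentIn A x).Nonempty →
      C.closedCell i ⊆ _root_.connectedComponentIn A x := by
    rintro i ⟨y, hyi, hyW⟩
    rw [connectedComponentIn_eq hyW]
    exact (C.isPreconnected_closedCell i).subset_connectedComponentIn
      (C.openCell_subset_closedCell i hyi)
      (hA.closedCell_subset_of_nonempty ⟨y, hyi, connectedComponentIn_subset A x hyW⟩)
  refine ⟨⟨C.cells (_root_.connectedComponentIn A x), ?_⟩, fun i hi => hclosed i ?_⟩
  · refine subset_antisymm (fun y hy => ?_) (iUnion₂_subset fun _ hj => hj)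
    obtain ⟨i, hyi⟩ := C.exists_mem_openCell y
    exact mem_biUnion ((C.openCell_subset_closedCell i).trans (hclosed i ⟨y, hyi, hy⟩)) hyi
  · obtain ⟨y, hy⟩ := C.openCell_nonempty i
    exact ⟨y, hy, hi hy⟩

variable [T2Space X]

theorem isClosed_closedCell (C : CWStruct X) (i : C.ι) : IsClosed (C.closedCell i) :=
  ((isCompact_closedBall 0 1).image_of_continuousOn (C.continuousOn i)).isClosed

theorem isClosed_of_forall_isClosed_preimage_map (C : CWStruct X) {S : Set X}
    (hS : ∀ i, IsClosed ((closedBall 0 1).domRestrict (C.map i) ⁻¹' S)) : IsClosed S := by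
  refine (C.weakTopology S).2 fun i => ?_
  set φ := (closedBall 0 1).domRestrict (C.map i)
  have hcell : S ∩ C.closedCell i = φ '' (φ ⁻¹' S) := by
    rw [image_preimage_eq_inter_range, range_domRestrict, CellStruct.closedCell]
  rw [hcell]
  exact ((hS i).isCompact.image (C.continuous_domRestrict_map i)).isClosed

theorem locallyConnectedSpace (C : CWStruct X) : LocallyConnectedSpace X := by
  refine locallyConnectedSpace_iff_connectedComponentIn_open.2 fun V hV x _ => ?_
  refine isClosed_compl_iff.1 (C.isClosed_of_forall_isClosed_preimage_map fun i => ?_)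
  have := (convex_closedBall (0 : EuclideanSpace ℝ (Fin (C.dim i))) 1).locallyPathConnectedSpace
  exact ((C.continuous_domRestrict_map i).isOpen_preimage_connectedComponentIn hV x).isClosed_compl

theorem IsSubcomplex.isClosed (hA : C.IsSubcomplex A) : IsClosed A := by
  refine (C.weakTopology A).2 fun i => ?_
  obtain ⟨F, -, hF⟩ := C.closureFinite i
  set T : Set C.ι := {j | (j = i ∨ j ∈ F) ∧ C.closedCell j ⊆ A}
  have hT : T.Finite := ((F.finite_toSet.insert i).subset fun _ hj => hj.1)
  -- `A` meets each open cell fully or not at all, and `closedCell i` meets only the open cells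
  -- `i` and those indexed by `F`.
  have hcell : A ∩ C.closedCell i = C.closedCell i ∩ ⋃ j ∈ T, C.closedCell j := by
    ext y
    refine ⟨fun ⟨hyA, hyi⟩ => ⟨hyi, ?_⟩, fun ⟨hyi, hy⟩ => ⟨?_, hyi⟩⟩
    · rw [C.closedCell_eq_openCell_union_sphereImage] at hyi
      obtain ⟨j, hj, hyj⟩ : ∃ j, (j = i ∨ j ∈ F) ∧ y ∈ C.openCell j := by
        rcases hyi with hyi | hyi
        · exact ⟨i, Or.inl rfl, hyi⟩
        · obtain ⟨j, hjF, hyj⟩ := mem_iUnion₂.1 (hF hyi)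
          exact ⟨j, Or.inr hjF, hyj⟩
      exact mem_biUnion ⟨hj, hA.closedCell_subset_of_nonempty ⟨y, hyj, hyA⟩⟩
        (C.openCell_subset_closedCell j hyj)
    · obtain ⟨j, hj, hyj⟩ := mem_iUnion₂.1 hy
      exact hj.2 hyj
  rw [hcell]
  exact (C.isClosed_closedCell i).inter (hT.isClosed_biUnion fun j _ => C.isClosed_closedCell j)

end CWStruct

theorem exists_connected_nbhd_of_locallyLT_general {X : Type} [TopologicalSpace X] [T2Space X]
    (κ : Cardinal) (C : CWStruct X) (h : C.LocallyLT κ) (x : X) :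
    ∃ U A : Set X, IsOpen U ∧ x ∈ U ∧ IsConnected U ∧
      C.IsSubcomplex A ∧ IsConnected A ∧ Cardinal.mk (C.cells A) < κ ∧ closure U ⊆ A := by
  obtain ⟨A₀, hA₀, hcard, hx⟩ := h x
  have := C.locallyConnectedSpace
  have hcells : C.cells (connectedComponentIn A₀ x) ⊆ C.cells A₀ :=
    fun _ hi => hi.trans (connectedComponentIn_subset A₀ x)
  have hclosure :
      closure (connectedComponentIn (interior A₀) x) ⊆ connectedComponentIn A₀ x :=
    isPreconnected_connectedComponentIn.closure.subset_connectedComponentIn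
      (subset_closure (mem_connectedComponentIn hx))
      (closure_minimal ((connectedComponentIn_subset _ x).trans interior_subset) hA₀.isClosed)
  exact ⟨_, _, isOpen_interior.connectedComponentIn, mem_connectedComponentIn hx,
    isConnected_connectedComponentIn_iff.2 hx, hA₀.connectedComponentIn x,
    isConnected_connectedComponentIn_iff.2 (interior_subset hx),
    (Cardinal.mk_le_mk_of_subset hcells).trans_lt hcard, hclosure⟩

/-- If a CW complex is locally less than `κ` for `κ` uncountable regular, then every point
has a connected open neighbourhood whose closure lies in a connected subcomplex with fewer
than `κ` many cells. -/
theorem exists_connected_nbhd_of_locallyLT {X : Type} [TopologicalSpace X] [T2Space X]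
    (κ : Cardinal) (hκ : Cardinal.aleph0 < κ) (hreg : κ.IsRegular)
    (C : CWStruct X) (h : C.LocallyLT κ) (x : X) :
    ∃ U A : Set X, IsOpen U ∧ x ∈ U ∧ IsConnected U ∧
      C.IsSubcomplex A ∧ IsConnected A ∧ Cardinal.mk (C.cells A) < κ ∧ closure U ⊆ A :=
  exists_connected_nbhd_of_locallyLT_general κ C h x
end
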